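/- arXiv:1905.06713 — 2 statements merged into one kernel-verified Lean document; each statement's English description precedes it below -/
import Mathlib

section
/- Let X be a countable set, F = (F_x)_{x∈X} a family of finite-dimensional complex normed vector spaces, and A : Γ(X;F) → Γ(X;F) a continuous linear operator on Γ(X;F) = ∏_x F_x (product topology). For finite K ⊆ X set U_K = {f ∈ Γ(X;F) : ∑_{x∈K} ‖f(x)‖_x ≤ 1}. Assume the dual operator A' : Γ_c(X;F') → Γ_c(X;F') is injective. Then for every nonempty finite K ⊆ X there exist ε > 0 and a nonempty finite K' ⊆ X such that A(U_K) ⊇ ε·U_{K'} (no closure needed). -/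
/-!
Each coordinate of `A f` depends on only finitely many coordinates of `f` (continuity for the
product topology), and injectivity of the dual operator makes every truncation
`f ↦ (A f)|_T` onto the finite-dimensional space `∏_{x ∈ T} F x`. For a fixed finite `P` the
traces on `P` of the kernels of these truncations decrease with `T` and are finite-dimensional,
so they stabilise at some `T₀`: a solution of `A f = g` on `T₀` can then be corrected, without
changing it on `P`, into a solution on any larger finite set (Mittag-Leffler). Exhausting the
countable set `X` and iterating produces an exact solution of `A f = g` that agrees on `K` with
the solution on `T₀` given by a bounded right inverse of the truncation to `T₀`, whence the bound
of `∑_{x ∈ K} ‖f x‖` by a multiple of `∑_{x ∈ T₀} ‖g x‖`.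
-/

open Function

namespace Finset

variable {ι : Type*} (R : Type*) [Semiring R] {M : ι → Type*} [∀ i, AddCommMonoid (M i)]
  [∀ i, Module R (M i)]

def restrictₗ (s : Finset ι) : (∀ i, M i) →ₗ[R] ∀ i : s, M i :=
  LinearMap.pi fun i => LinearMap.proj (i : ι)

@[simp]
theorem coe_restrictₗ (s : Finset ι) : ⇑(s.restrictₗ R (M := M)) = s.restrict := rfl

end Finset

theorem ContinuousLinearMap.exists_finset_dependsOn {𝕜 ι E : Type*} {M : ι → Type*}
    [NontriviallyNormedField 𝕜] [∀ i, AddCommGroup (M i)] [∀ i, Module 𝕜 (M i)]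
    [∀ i, TopologicalSpace (M i)] [NormedAddCommGroup E] [NormedSpace 𝕜 E]
    (L : (∀ i, M i) →L[𝕜] E) : ∃ S : Finset ι, DependsOn L S := by
  have hball : L ⁻¹' Metric.ball 0 1 ∈ nhds (0 : ∀ i, M i) :=
    L.continuous.continuousAt.preimage_mem_nhds (by simpa using Metric.ball_mem_nhds 0 one_pos)
  rw [nhds_pi, Filter.mem_pi] at hball
  obtain ⟨I, hI, t, ht, hsub⟩ := hball
  -- `L` maps the whole subspace `{f | ∀ i ∈ I, f i = 0}` into the unit ball, so kills it.
  refine ⟨hI.toFinset, fun f f' hff' => sub_eq_zero.1 ?_⟩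
  rw [← map_sub]
  by_contra hne
  obtain ⟨c, hc⟩ := NormedField.exists_lt_norm 𝕜 ‖L (f - f')‖⁻¹
  have hmem : c • (f - f') ∈ Set.pi I t := fun i hi => by
    simpa [hff' i (hI.mem_toFinset.2 hi)] using mem_of_mem_nhds (ht i)
  have hlt : ‖c‖ * ‖L (f - f')‖ < 1 := by simpa [norm_smul] using hsub hmem
  have := (inv_lt_iff_one_lt_mul₀ (norm_pos_iff.2 hne)).1 hc
  linarith

section Gluing

variable {X : Type*} {β : X → Type*}

theorem exists_seq_of_forall_exists_extend {P : ℕ → Set X} {Good : ℕ → (∀ x, β x) → Prop}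
    (hext : ∀ n f, Good n f → ∃ f', Good (n + 1) f' ∧ ∀ x ∈ P n, f' x = f x)
    {f₀ : ∀ x, β x} (h₀ : Good 0 f₀) :
    ∃ s : ℕ → ∀ x, β x, s 0 = f₀ ∧ (∀ n, Good n (s n)) ∧ ∀ n, ∀ x ∈ P n, s (n + 1) x = s n x := by
  have : Nonempty (∀ x, β x) := ⟨f₀⟩
  choose! next hnext_good hnext_eq using hext
  let s : ℕ → ∀ x, β x := fun n => Nat.rec f₀ next n
  have hgood : ∀ n, Good n (s n) := fun n => by
    induction n with
    | zero => exact h₀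
    | succ n ih => exact hnext_good n (s n) ih
  exact ⟨s, rfl, hgood, fun n => hnext_eq n (s n) (hgood n)⟩

theorem exists_forall_eq_of_seq {P : ℕ → Set X} (hP : Monotone P) (hcover : ∀ x, ∃ n, x ∈ P n)
    {s : ℕ → ∀ x, β x} (hs : ∀ n, ∀ x ∈ P n, s (n + 1) x = s n x) :
    ∃ f : ∀ x, β x, ∀ n, ∀ x ∈ P n, f x = s n x := by
  have hstable : ∀ n m, n ≤ m → ∀ x ∈ P n, s m x = s n x := fun n m hnm => by
    induction m, hnm using Nat.le_induction with
    | base => exact fun _ _ => rfl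
    | succ m hnm ih => exact fun x hx => (hs m x (hP hnm hx)).trans (ih x hx)
  choose N hN using hcover
  refine ⟨fun x => s (N x) x, fun n x hx => ?_⟩
  calc s (N x) x = s (max n (N x)) x := (hstable _ _ (le_max_right _ _) x (hN x)).symm
    _ = s n x := hstable _ _ (le_max_left _ _) x hx

end Gluing

section Solutions

variable {k X : Type*} [Field k] {F : X → Type*} [∀ x, AddCommGroup (F x)] [∀ x, Module k (F x)]
  (A : (∀ x, F x) →ₗ[k] ∀ x, F x)

def ExtendsToSolutions (g : ∀ x, F x) (P : Finset X) (f : ∀ x, F x) : Prop :=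
  ∀ T : Finset X, ∃ h, (∀ x ∈ T, A h x = g x) ∧ ∀ x ∈ P, h x = f x

def kerTrace (P T : Finset X) : Submodule k (∀ x : P, F x) :=
  (LinearMap.ker (T.restrictₗ k ∘ₗ A)).map (P.restrictₗ k)

theorem mem_ker_restrictₗ_comp {T : Finset X} {f : ∀ x, F x} :
    f ∈ LinearMap.ker (T.restrictₗ k ∘ₗ A) ↔ ∀ x ∈ T, A f x = 0 := by
  simp [funext_iff]

theorem kerTrace_antitone (P : Finset X) : Antitone (kerTrace A P) := fun _ _ hTT' =>
  Submodule.map_mono fun _ hf => (mem_ker_restrictₗ_comp A).2 fun x hx =>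
    (mem_ker_restrictₗ_comp A).1 hf x (hTT' hx)

theorem exists_kerTrace_eq [∀ x, FiniteDimensional k (F x)] (P : Finset X) :
    ∃ T₀ : Finset X, ∀ T, T₀ ⊆ T → kerTrace A P T = kerTrace A P T₀ := by
  obtain ⟨_, ⟨T₀, rfl⟩, hmin⟩ :=
    wellFounded_lt.has_min (Set.range (kerTrace A P)) (Set.range_nonempty _)
  exact ⟨T₀, fun T hT => eq_of_le_of_not_lt (kerTrace_antitone A P hT) (hmin _ ⟨T, rfl⟩)⟩

variable {A}

theorem exists_forall_mem_eq (hA : ∀ T : Finset X, Surjective (T.restrictₗ k ∘ₗ A))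
    (T : Finset X) (g : ∀ x, F x) : ∃ f, ∀ x ∈ T, A f x = g x := by
  obtain ⟨f, hf⟩ := hA T (T.restrict g)
  exact ⟨f, fun x hx => congrFun hf ⟨x, hx⟩⟩

/-- Mittag-Leffler: once the traces `kerTrace A P T` have stabilised at `T₀`, on `P` a solution
on `T₀` differs from a solution on `T₀ ∪ T` by an element of the stable trace. -/
theorem exists_extendsToSolutions [∀ x, FiniteDimensional k (F x)]
    (hA : ∀ T : Finset X, Surjective (T.restrictₗ k ∘ₗ A)) (P : Finset X) :
    ∃ T₀ : Finset X, ∀ g f, (∀ x ∈ T₀, A f x = g x) → ExtendsToSolutions A g P f := by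
  classical
  obtain ⟨T₀, hstab⟩ := exists_kerTrace_eq A P
  refine ⟨T₀, fun g f hf T => ?_⟩
  obtain ⟨f₁, hf₁⟩ := exists_forall_mem_eq hA (T₀ ∪ T) g
  have hdiff : P.restrictₗ k (f₁ - f) ∈ kerTrace A P (T₀ ∪ T) := by
    rw [hstab _ Finset.subset_union_left]
    refine ⟨f₁ - f, (mem_ker_restrictₗ_comp A).2 fun x hx => ?_, rfl⟩
    rw [map_sub, Pi.sub_apply, hf₁ x (Finset.mem_union_left _ hx), hf x hx, sub_self]
  obtain ⟨k, hk, hkP⟩ := hdiff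
  rw [SetLike.mem_coe, mem_ker_restrictₗ_comp] at hk
  refine ⟨f₁ - k, fun x hx => ?_, fun x hx => ?_⟩
  · rw [map_sub, Pi.sub_apply, hf₁ x (Finset.mem_union_right _ hx),
      hk x (Finset.mem_union_right _ hx), sub_zero]
  · have := congrFun hkP ⟨x, hx⟩
    simp only [Finset.coe_restrictₗ, Finset.restrict, Pi.sub_apply] at this
    rw [Pi.sub_apply, this, sub_sub_cancel]

theorem ExtendsToSolutions.exists_extend [∀ x, FiniteDimensional k (F x)]
    (hA : ∀ T : Finset X, Surjective (T.restrictₗ k ∘ₗ A)) {g f : ∀ x, F x} {P : Finset X}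
    (hf : ExtendsToSolutions A g P f) (Q : Finset X) :
    ∃ f', ExtendsToSolutions A g Q f' ∧ ∀ x ∈ P, f' x = f x := by
  obtain ⟨T₀, hT₀⟩ := exists_extendsToSolutions hA Q
  obtain ⟨h, hsol, hP⟩ := hf T₀
  exact ⟨h, hT₀ g h hsol, hP⟩

theorem ExtendsToSolutions.exists_eq [Countable X] [∀ x, FiniteDimensional k (F x)]
    (hA : ∀ T : Finset X, Surjective (T.restrictₗ k ∘ₗ A))
    (hrow : ∀ x, ∃ S : Finset X, DependsOn (fun f => A f x) S) {g f : ∀ x, F x} {P : Finset X}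
    (hf : ExtendsToSolutions A g P f) : ∃ f', A f' = g ∧ ∀ x ∈ P, f' x = f x := by
  classical
  obtain ⟨i, hi⟩ := Countable.exists_injective_nat X
  let Q : ℕ → Finset X := fun n => P ∪ (Finset.range n).preimage i hi.injOn
  have hmem_Q : ∀ {x n}, i x < n → x ∈ Q n := fun h => by simp [Q, h]
  have hQ : Monotone fun n => (Q n : Set X) := fun m n hmn =>
    Finset.coe_subset.2 <| Finset.union_subset_union_right fun x => by
      simpa using fun h => h.trans_le hmn
  have hQ₀ : Q 0 = P := by simp [Q]
  obtain ⟨s, hs₀, hs_good, hs_succ⟩ := exists_seq_of_forall_exists_extend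
    (P := fun n => (Q n : Set X)) (Good := fun n => ExtendsToSolutions A g (Q n))
    (fun n f hf => ExtendsToSolutions.exists_extend hA hf (Q (n + 1)))
    (hQ₀ ▸ hf : ExtendsToSolutions A g (Q 0) f)
  obtain ⟨f', hf'⟩ :=
    exists_forall_eq_of_seq hQ (fun x => ⟨i x + 1, hmem_Q (Nat.lt_succ_self _)⟩) hs_succ
  refine ⟨f', funext fun x => ?_, fun x hx => hs₀ ▸ hf' 0 x (hQ₀ ▸ hx)⟩
  obtain ⟨S, hS⟩ := hrow x
  have hSQ : ∀ y ∈ S, y ∈ Q (S.sup i + 1) := fun y hy =>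
    hmem_Q (Nat.lt_succ_of_le (Finset.le_sup hy))
  obtain ⟨h, hsol, hagree⟩ := hs_good (S.sup i + 1) {x}
  calc A f' x = A h x := hS fun y hy => (hf' _ y (hSQ y hy)).trans (hagree y (hSQ y hy)).symm
    _ = g x := hsol x (Finset.mem_singleton_self x)

end Solutions

section Normed

variable {𝕜 : Type*} [NontriviallyNormedField 𝕜] [CompleteSpace 𝕜]

theorem LinearMap.exists_preimage_norm_le_of_surjective {M V W : Type*} [AddCommGroup M]
    [Module 𝕜 M] [NormedAddCommGroup V] [NormedSpace 𝕜 V] [FiniteDimensional 𝕜 V]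
    [NormedAddCommGroup W] [NormedSpace 𝕜 W] {Φ : M →ₗ[𝕜] V} (hΦ : Surjective Φ)
    (π : M →ₗ[𝕜] W) : ∃ C, 0 ≤ C ∧ ∀ y, ∃ m, Φ m = y ∧ ‖π m‖ ≤ C * ‖y‖ := by
  obtain ⟨R, hR⟩ := Φ.exists_rightInverse_of_surjective (LinearMap.range_eq_top.2 hΦ)
  let L := (π ∘ₗ R).toContinuousLinearMap
  exact ⟨‖L‖, norm_nonneg _, fun y => ⟨R y, LinearMap.congr_fun hR y, L.le_opNorm y⟩⟩

variable {X : Type*} {F : X → Type*} [∀ x, NormedAddCommGroup (F x)] [∀ x, NormedSpace 𝕜 (F x)]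
  [∀ x, FiniteDimensional 𝕜 (F x)] {A : (∀ x, F x) →ₗ[𝕜] ∀ x, F x}

theorem surjective_restrictₗ_comp_of_dual_injective
    (hinj : ∀ φ : ∀ x, F x →L[𝕜] 𝕜, {x | φ x ≠ 0}.Finite →
      (∀ f : ∀ x, F x, ∑ᶠ x, φ x (A f x) = 0) → ∀ x, φ x = 0)
    (T : Finset X) : Surjective (T.restrictₗ 𝕜 ∘ₗ A) := by
  classical
  by_contra hA
  obtain ⟨φ, hφ, hrange⟩ := (LinearMap.range (T.restrictₗ 𝕜 ∘ₗ A)).exists_le_ker_of_lt_top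
    (lt_top_iff_ne_top.2 (mt LinearMap.range_eq_top.1 hA))
  let ψ : ∀ x, F x →L[𝕜] 𝕜 := fun x =>
    (φ ∘ₗ T.restrictₗ 𝕜 ∘ₗ LinearMap.single 𝕜 F x).toContinuousLinearMap
  have hψ_apply : ∀ x v, ψ x v = φ (T.restrict (Pi.single x v)) := fun _ _ => rfl
  have hψ_support : ∀ x ∉ T, ψ x = 0 := fun x hx => by
    ext v
    rw [hψ_apply, zero_apply, ← φ.map_zero]
    congr 1
    funext y
    exact Pi.single_eq_of_ne (by rintro rfl; exact hx y.2) v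
  have hψ_finsum : ∀ h : ∀ x, F x, ∑ᶠ x, ψ x (h x) = φ (T.restrict h) := by
    intro h
    rw [finsum_eq_finsetSum_of_support_subset _ fun x hx => ?_]
    · calc ∑ x ∈ T, ψ x (h x) = (φ ∘ₗ T.restrictₗ 𝕜) (∑ x ∈ T, Pi.single x (h x)) := by
            rw [map_sum]; rfl
        _ = φ (T.restrict h) := by
            change φ (T.restrict (∑ x ∈ T, Pi.single x (h x))) = φ (T.restrict h)
            congr 1
            funext y
            simp [Finset.restrict, Finset.sum_pi_single]
    · by_contra hxT
      exact hx (by simp [hψ_support x hxT])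
  have hψ : ∀ x, ψ x = 0 :=
    hinj ψ (T.finite_toSet.subset fun x hx => not_imp_comm.1 (hψ_support x) hx)
      fun f => (hψ_finsum (A f)).trans (hrange ⟨f, rfl⟩)
  refine hφ (LinearMap.ext fun v => ?_)
  obtain ⟨h, rfl⟩ : ∃ h, T.restrict h = v := Subtype.surjective_restrict (β := F) (· ∈ T) v
  simpa [hψ] using (hψ_finsum h).symm

theorem exists_extendsToSolutions_sum_norm_le
    (hA : ∀ T : Finset X, Surjective (T.restrictₗ 𝕜 ∘ₗ A)) (K : Finset X) :
    ∃ C, 0 ≤ C ∧ ∃ T₀ : Finset X, ∀ g, ∃ f,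
      ExtendsToSolutions A g K f ∧ ∑ x ∈ K, ‖f x‖ ≤ C * ∑ x ∈ T₀, ‖g x‖ := by
  obtain ⟨T₀, hT₀⟩ := exists_extendsToSolutions hA K
  obtain ⟨C, hC, hpre⟩ := LinearMap.exists_preimage_norm_le_of_surjective (hA T₀) (K.restrictₗ 𝕜)
  refine ⟨K.card * C, by positivity, T₀, fun g => ?_⟩
  obtain ⟨f, hf, hfC⟩ := hpre (T₀.restrict g)
  refine ⟨f, hT₀ g f fun x hx => congrFun hf ⟨x, hx⟩, ?_⟩
  have hg : ‖T₀.restrict g‖ ≤ ∑ x ∈ T₀, ‖g x‖ :=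
    (pi_norm_le_iff_of_nonneg (Finset.sum_nonneg fun _ _ => norm_nonneg _)).2 fun x =>
      Finset.single_le_sum (f := fun x => ‖g x‖) (fun _ _ => norm_nonneg _) x.2
  calc ∑ x ∈ K, ‖f x‖ ≤ K.card • ‖K.restrict f‖ :=
        Finset.sum_le_card_nsmul _ _ _ fun x hx => norm_le_pi_norm (K.restrict f) ⟨x, hx⟩
    _ ≤ K.card * (C * ∑ x ∈ T₀, ‖g x‖) := by
        rw [nsmul_eq_mul]
        gcongr
        exact hfC.trans (by gcongr)
    _ = K.card * C * ∑ x ∈ T₀, ‖g x‖ := by ring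

end Normed

/-- **Main lemma (open mapping type statement, without closure).**
Let `X` be a countable set, `F = (F x)_{x ∈ X}` a family of finite-dimensional complex normed
vector spaces and `A` a continuous linear operator on `Γ(X;F) = ∀ x, F x` (product topology).
For finite `K ⊆ X` let `U_K = {f | ∑_{x ∈ K} ‖f x‖ ≤ 1}`.  If the dual operator is injective,
i.e. every finitely supported family `φ` of functionals with `∑ x, φ x (A f x) = 0` for all `f`
vanishes, then for every nonempty finite `K ⊆ X` there are `ε > 0` and a nonempty finite
`K' ⊆ X` with `ε·U_{K'} ⊆ A(U_K)`. -/
theorem image_unitBall_absorbing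
    {X : Type*} [Countable X]
    (F : X → Type*) [∀ x, NormedAddCommGroup (F x)] [∀ x, NormedSpace ℂ (F x)]
    [∀ x, FiniteDimensional ℂ (F x)]
    (A : (∀ x, F x) →L[ℂ] (∀ x, F x))
    (hinj : ∀ φ : ∀ x, F x →L[ℂ] ℂ, {x | φ x ≠ 0}.Finite →
      (∀ f : ∀ x, F x, ∑ᶠ x, φ x (A f x) = 0) → ∀ x, φ x = 0) :
    ∀ K : Finset X, K.Nonempty →
      ∃ ε : ℝ, 0 < ε ∧ ∃ K' : Finset X, K'.Nonempty ∧
        {g : ∀ x, F x | ∑ x ∈ K', ‖g x‖ ≤ ε} ⊆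
          A '' {f : ∀ x, F x | ∑ x ∈ K, ‖f x‖ ≤ 1} := by
  classical
  intro K hK
  have hA := surjective_restrictₗ_comp_of_dual_injective (A := A.toLinearMap) hinj
  have hrow : ∀ x, ∃ S : Finset X, DependsOn (fun f => A f x) S := fun x =>
    ((ContinuousLinearMap.proj x).comp A).exists_finset_dependsOn
  obtain ⟨C, hC, T₀, hT₀⟩ := exists_extendsToSolutions_sum_norm_le hA K
  refine ⟨(C + 1)⁻¹, by positivity, T₀ ∪ K, hK.mono Finset.subset_union_right, fun g hg => ?_⟩
  obtain ⟨f, hf, hfK⟩ := hT₀ g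
  obtain ⟨f', rfl, hf'⟩ := hf.exists_eq hA hrow
  refine ⟨f', ?_, rfl⟩
  have hgT₀ : ∑ x ∈ T₀, ‖A f' x‖ ≤ (C + 1)⁻¹ := le_trans
    (Finset.sum_le_sum_of_subset_of_nonneg Finset.subset_union_left fun _ _ _ => norm_nonneg _) hg
  calc ∑ x ∈ K, ‖f' x‖ = ∑ x ∈ K, ‖f x‖ := Finset.sum_congr rfl fun x hx => by rw [hf' x hx]
    _ ≤ C * (C + 1)⁻¹ := hfK.trans (mul_le_mul_of_nonneg_left hgT₀ hC)
    _ ≤ 1 := by rw [mul_inv_le_iff₀ (by positivity)]; linarith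
end

section
/- Let (X,b) be a locally finite weighted graph all of whose connected components are infinite, and let V : X → ℝ be such that for every x ∈ X either V(x) ≥ 0 or V(x) + 2·deg(x) ≤ 0. Then the Schrödinger operator L_V : C(X) → C(X), L_V f(x) = ∑_{y∈X} b(x,y)(f(x)-f(y)) + V(x)f(x), is surjective. -/
/-!
Write `L_V f x = ∑_y A x y f y` with the symmetric, row-finite matrix
`A x y = (deg x + V x) [x = y] - b x y`. The space `C(X)` is the algebraic dual of the space of
finitely supported functions, and `L_V` on `C(X)` is the dual map of `L_V` restricted to finitely
supported functions (this is where the symmetry of `b` enters); so `L_V` is surjective as soon as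
that restriction is injective, i.e. the rows of `A` are linearly independent.
Injectivity is a maximum principle: the sign condition says `deg x ≤ |deg x + V x|`, so at a
maximum `x` of `|φ|` the equation `(deg x + V x) φ x = ∑_y b x y φ y` forces `|φ| = |φ x|` at
every neighbour of `x`; hence `|φ|` is constant on the infinite component of a maximum, which
for finitely supported `φ` means `φ = 0`.
-/

open Function

section RowFinite

variable {K X : Type*} [Field K]

theorem surjective_finsum_mul_of_linearIndependent (A : X → X → K)
    (hrow : ∀ x, (support (A x)).Finite) (hA : LinearIndependent K A) :
    Surjective (fun (f : X → K) (x : X) => ∑ᶠ y, A x y * f y) := by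
  classical
  intro g
  obtain ⟨Λ, hΛ⟩ := LinearMap.dualMap_surjective_of_injective hA (Finsupp.linearCombination K g)
  have hΛA : ∀ x, Λ (A x) = g x := fun x => by
    simpa using LinearMap.congr_fun hΛ (Finsupp.single x 1)
  refine ⟨fun y => Λ (Pi.single y 1), funext fun x => ?_⟩
  set s := (hrow x).toFinset
  have hsupp : support (fun y => A x y * Λ (Pi.single y 1)) ⊆ s := by
    intro y hy
    simpa [s] using left_ne_zero_of_mul hy
  have hrow_eq : ∑ y ∈ s, A x y • Pi.single y 1 = A x := by
    funext z
    by_cases hz : z ∈ s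
    · simp [Finset.sum_apply, Pi.single_apply, hz]
    · have hAz : A x z = 0 := by simpa [s] using hz
      simp [Finset.sum_apply, Pi.single_apply, hz, hAz]
  show ∑ᶠ y, A x y * Λ (Pi.single y 1) = g x
  rw [finsum_eq_sum_of_support_subset _ hsupp, ← hΛA x]
  conv_rhs => rw [← hrow_eq]
  simp only [map_sum, map_smul, smul_eq_mul]

theorem linearIndependent_of_symm (A : X → X → K) (hsymm : ∀ x y, A x y = A y x)
    (hinj : ∀ φ : X →₀ K, (fun x => ∑ᶠ y, A x y * φ y) = 0 → φ = 0) :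
    LinearIndependent K A := by
  rw [linearIndependent_iff]
  intro φ hφ
  refine hinj φ (funext fun x => ?_)
  have hsupp : support (fun y => A x y * φ y) ⊆ φ.support := by
    intro y hy
    simpa using right_ne_zero_of_mul hy
  rw [finsum_eq_sum_of_support_subset _ hsupp, ← congrFun hφ x,
    Finsupp.linearCombination_apply, Finsupp.sum, Finset.sum_apply]
  exact Finset.sum_congr rfl fun y _ => by rw [hsymm, mul_comm, Pi.smul_apply, smul_eq_mul]

end RowFinite

section WeightedGraph

variable {X : Type*} (b : X → X → ℝ) (V : X → ℝ)

noncomputable def schroedinger (f : X → ℂ) (x : X) : ℂ :=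
  (∑ᶠ y, (b x y : ℂ) * (f x - f y)) + (V x : ℂ) * f x

open Classical in
noncomputable def schroedingerMatrix (x y : X) : ℝ :=
  (if x = y then (∑ᶠ z, b x z) + V x else 0) - b x y

theorem schroedingerMatrix_symm (hsym : ∀ x y, b x y = b y x) (x y : X) :
    schroedingerMatrix b V x y = schroedingerMatrix b V y x := by
  by_cases h : x = y
  · rw [h]
  · simp only [schroedingerMatrix, if_neg h, if_neg (Ne.symm h), hsym x y]

theorem support_schroedingerMatrix_subset (x : X) :
    support (schroedingerMatrix b V x) ⊆ insert x (support (b x)) := by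
  intro y hy
  by_cases h : x = y
  · exact Or.inl h.symm
  · right
    simpa [schroedingerMatrix, if_neg h] using hy

theorem schroedinger_eq_finsum_mul {x : X} (hlf : (support (b x)).Finite) (f : X → ℂ) :
    schroedinger b V f x = ∑ᶠ y, (schroedingerMatrix b V x y : ℂ) * f y := by
  classical
  set s := insert x hlf.toFinset
  have hs : insert x (support (b x)) ⊆ s := by simp [s]
  have hxs : x ∈ s := Finset.mem_insert_self _ _
  have hdeg : ∑ᶠ y, b x y = ∑ y ∈ s, b x y :=
    finsum_eq_sum_of_support_subset _ ((Set.subset_insert _ _).trans hs)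
  rw [schroedinger, finsum_eq_sum_of_support_subset (s := s), finsum_eq_sum_of_support_subset (s := s)]
  · simp only [schroedingerMatrix, Complex.ofReal_sub, apply_ite Complex.ofReal, Complex.ofReal_zero,
      sub_mul, ite_mul, zero_mul, mul_sub, Finset.sum_sub_distrib, Finset.sum_ite_eq, hdeg,
      ← Finset.sum_mul, if_pos hxs]
    push_cast
    ring
  · refine fun y hy => hs (support_schroedingerMatrix_subset b V x ?_)
    exact Complex.ofReal_ne_zero.1 (left_ne_zero_of_mul hy)
  · refine fun y hy => hs (Set.mem_insert_of_mem _ ?_)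
    exact Complex.ofReal_ne_zero.1 (left_ne_zero_of_mul hy)

theorem norm_eq_norm_of_schroedinger_eq_zero {f : X → ℂ} {x : X} (hlf : (support (b x)).Finite)
    (hbnn : ∀ y, 0 ≤ b x y) (hdom : ∑ᶠ y, b x y ≤ |∑ᶠ y, b x y + V x|)
    (hfx : schroedinger b V f x = 0) (hmax : ∀ y, ‖f y‖ ≤ ‖f x‖) {z : X} (hz : 0 < b x z) :
    ‖f z‖ = ‖f x‖ := by
  classical
  set s := hlf.toFinset
  have hs : support (b x) ⊆ s := by simp [s]
  set D := ∑ᶠ y, b x y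
  have hD : D = ∑ y ∈ s, b x y := finsum_eq_sum_of_support_subset _ hs
  have heq : ((D + V x : ℝ) : ℂ) * f x = ∑ y ∈ s, (b x y : ℂ) * f y := by
    rw [schroedinger, finsum_eq_sum_of_support_subset _ (s := s)] at hfx
    · simp only [mul_sub, Finset.sum_sub_distrib, ← Finset.sum_mul] at hfx
      rw [hD]
      push_cast
      linear_combination hfx
    · exact fun y hy => hs (Complex.ofReal_ne_zero.1 (left_ne_zero_of_mul hy))
  have hle : ∀ y ∈ s, b x y * ‖f y‖ ≤ b x y * ‖f x‖ :=
    fun y _ => mul_le_mul_of_nonneg_left (hmax y) (hbnn y)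
  have hsum : ∑ y ∈ s, b x y * ‖f y‖ = ∑ y ∈ s, b x y * ‖f x‖ := by
    refine le_antisymm (Finset.sum_le_sum hle) ?_
    calc ∑ y ∈ s, b x y * ‖f x‖ = D * ‖f x‖ := by rw [hD, Finset.sum_mul]
      _ ≤ |D + V x| * ‖f x‖ := mul_le_mul_of_nonneg_right hdom (norm_nonneg _)
      _ = ‖∑ y ∈ s, (b x y : ℂ) * f y‖ := by
        rw [← heq, norm_mul, Complex.norm_real, Real.norm_eq_abs]
      _ ≤ ∑ y ∈ s, ‖(b x y : ℂ) * f y‖ := norm_sum_le _ _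
      _ = ∑ y ∈ s, b x y * ‖f y‖ := Finset.sum_congr rfl fun y _ => by
        rw [norm_mul, Complex.norm_real, Real.norm_of_nonneg (hbnn y)]
  have hzs : z ∈ s := by simpa [s] using hz.ne'
  exact mul_left_cancel₀ hz.ne' ((Finset.sum_eq_sum_iff_of_le hle).1 hsum z hzs)

variable {b V}

theorem norm_eq_norm_of_reflTransGen (hlf : ∀ x, (support (b x)).Finite)
    (hbnn : ∀ x y, 0 ≤ b x y) (hdom : ∀ x, ∑ᶠ y, b x y ≤ |∑ᶠ y, b x y + V x|)
    {f : X → ℂ} (hf : schroedinger b V f = 0) {x₀ y : X}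
    (hmax : ∀ z, ‖f z‖ ≤ ‖f x₀‖) (hy : Relation.ReflTransGen (fun u v => 0 < b u v) x₀ y) :
    ‖f y‖ = ‖f x₀‖ := by
  induction hy with
  | refl => rfl
  | tail _ huv ih =>
    rw [← ih] at hmax ⊢
    exact norm_eq_norm_of_schroedinger_eq_zero b V (hlf _) (hbnn _) (hdom _)
      (congrFun hf _) hmax huv

theorem eq_zero_of_schroedinger_eq_zero (hlf : ∀ x, (support (b x)).Finite)
    (hbnn : ∀ x y, 0 ≤ b x y) (hdom : ∀ x, ∑ᶠ y, b x y ≤ |∑ᶠ y, b x y + V x|)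
    (hinf : ∀ x, {y | Relation.ReflTransGen (fun u v => 0 < b u v) x y}.Infinite)
    (φ : X →₀ ℂ) (hφ : schroedinger b V φ = 0) : φ = 0 := by
  rcases φ.support.eq_empty_or_nonempty with hempty | hne
  · exact Finsupp.support_eq_empty.1 hempty
  obtain ⟨x₀, -, hx₀⟩ := φ.support.exists_max_image (fun x => ‖φ x‖) hne
  have hmax : ∀ y, ‖φ y‖ ≤ ‖φ x₀‖ := fun y => by
    by_cases hy : y ∈ φ.support
    · exact hx₀ y hy
    · simp [Finsupp.notMem_support_iff.1 hy]
  have hx₀zero : φ x₀ = 0 := by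
    by_contra hx₀ne
    refine hinf x₀ (φ.support.finite_toSet.subset fun y hy => ?_)
    rw [Finset.mem_coe, Finsupp.mem_support_iff, ← norm_ne_zero_iff,
      norm_eq_norm_of_reflTransGen hlf hbnn hdom hφ hmax hy, norm_ne_zero_iff]
    exact hx₀ne
  ext y
  simpa [hx₀zero] using hmax y

end WeightedGraph

theorem schroedinger_surjective_of_pointwise_sign_general
    {X : Type*}
    (b : X → X → ℝ)
    (hbnn : ∀ x y, 0 ≤ b x y)
    (hsym : ∀ x y, b x y = b y x)
    (hlf : ∀ x, {y | b x y ≠ 0}.Finite)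
    (hinfcomp : ∀ x, {y | Relation.ReflTransGen (fun u v => 0 < b u v) x y}.Infinite)
    (V : X → ℝ)
    (hV : ∀ x, 0 ≤ V x ∨ V x + 2 * (∑ᶠ y, b x y) ≤ 0) :
    Function.Surjective (fun (f : X → ℂ) (x : X) =>
      (∑ᶠ y, (b x y : ℂ) * (f x - f y)) + (V x : ℂ) * f x) := by
  have hdom : ∀ x, ∑ᶠ y, b x y ≤ |∑ᶠ y, b x y + V x| := fun x =>
    le_abs.2 ((hV x).imp (fun _ => by linarith [finsum_nonneg (hbnn x)]) fun _ => by linarith)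
  have hL : schroedinger b V = fun f x => ∑ᶠ y, (schroedingerMatrix b V x y : ℂ) * f y :=
    funext fun f => funext fun x => schroedinger_eq_finsum_mul b V (hlf x) f
  have hrow : ∀ x, (support fun y => (schroedingerMatrix b V x y : ℂ)).Finite := fun x =>
    ((hlf x).insert x).subset fun y hy =>
      support_schroedingerMatrix_subset b V x (Complex.ofReal_ne_zero.1 hy)
  change Surjective (schroedinger b V)
  rw [hL]
  refine surjective_finsum_mul_of_linearIndependent _ hrow
    (linearIndependent_of_symm _ (fun x y => congrArg _ (schroedingerMatrix_symm b V hsym x y)) ?_)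
  intro φ hφ
  exact eq_zero_of_schroedinger_eq_zero hlf hbnn hdom hinfcomp φ (hL ▸ hφ)

/-- **Surjectivity of Schrödinger operators satisfying the pointwise maximum principle.**
Let `(X,b)` be a locally finite weighted graph all of whose connected components are infinite
and let `V : X → ℝ` be such that for every `x ∈ X` either `V x ≥ 0` or `V x + 2 deg x ≤ 0`.
Then the Schrödinger operator `L_V f x = ∑_y b(x,y)(f x - f y) + V x · f x` is surjective
on `C(X)`. -/
theorem schroedinger_surjective_of_pointwise_sign
    {X : Type*} [Countable X]
    (b : X → X → ℝ)
    (hb0 : ∀ x, b x x = 0)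
    (hbnn : ∀ x y, 0 ≤ b x y)
    (hsym : ∀ x y, b x y = b y x)
    (hlf : ∀ x, {y | b x y ≠ 0}.Finite)
    (hinfcomp : ∀ x, {y | Relation.ReflTransGen (fun u v => 0 < b u v) x y}.Infinite)
    (V : X → ℝ)
    (hV : ∀ x, 0 ≤ V x ∨ V x + 2 * (∑ᶠ y, b x y) ≤ 0) :
    Function.Surjective (fun (f : X → ℂ) (x : X) =>
      (∑ᶠ y, (b x y : ℂ) * (f x - f y)) + (V x : ℂ) * f x) :=
  schroedinger_surjective_of_pointwise_sign_general b hbnn hsym hlf hinfcomp V hV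
end
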